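/- arXiv:2106.02722 — 2 statements merged into one kernel-verified Lean document; each statement's English description precedes it below -/
import Mathlib

section
/- Let d ≥ 1, τ ∈ (0,1) and f, g ∈ L²(ℝ^d). Then for every (x,ξ) ∈ ℝ^{2d}: V_g f(x,ξ) = τ^d e^{−2πi(1−τ)x·ξ} · W_τ(f, Q_τ^{−1}g)((1−τ)x, τξ), where Q_τ^{−1}g(t) = g(−(τ/(1−τ))t). -/
open MeasureTheory Complex Real ComplexConjugate
open scoped RealInnerProductSpace ENNReal NNReal

noncomputable section

abbrev Ed (d : ℕ) := EuclideanSpace ℝ (Fin d)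

/-- Short-time Fourier transform:
`V_g f (x,ξ) = ∫ f(t) conj(g(t-x)) e^{-2πi t·ξ} dt`. -/
def STFT {d : ℕ} (g f : Ed d → ℂ) (x ξ : Ed d) : ℂ :=
  ∫ t : Ed d, f t * conj (g (t - x)) * Complex.exp (-(2 * π * Complex.I) * (⟪t, ξ⟫ : ℝ))

/-- cross-τ-Wigner distribution:
`W_τ(f,g)(x,ξ) = ∫ e^{-2πi t·ξ} f(x+τt) conj(g(x-(1-τ)t)) dt`. -/
def Wtau {d : ℕ} (τ : ℝ) (f g : Ed d → ℂ) (x ξ : Ed d) : ℂ :=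
  ∫ t : Ed d, Complex.exp (-(2 * π * Complex.I) * (⟪t, ξ⟫ : ℝ)) * f (x + τ • t) *
    conj (g (x - (1 - τ) • t))

/-- for `τ ∈ (0,1)` and `f, g ∈ L²(ℝ^d)`,
`V_g f(x,ξ) = τ^d e^{−2πi(1−τ)x·ξ} W_τ(f, Q_τ^{−1}g)((1−τ)x, τξ)`,
where `Q_τ^{−1}g(t) = g(−(τ/(1−τ))t)`. -/
theorem stmt0 (d : ℕ) (hd : 1 ≤ d) (τ : ℝ) (hτ : τ ∈ Set.Ioo (0:ℝ) 1)
    (f g : Ed d → ℂ) (hf : MemLp f 2 (volume : Measure (Ed d)))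
    (hg : MemLp g 2 (volume : Measure (Ed d))) (x ξ : Ed d) :
    STFT g f x ξ =
      (τ ^ d : ℝ) * Complex.exp (-(2 * π * Complex.I) * ((1 - τ) * (⟪x, ξ⟫ : ℝ))) *
        Wtau τ f (fun t => g (-(τ / (1 - τ)) • t)) ((1 - τ) • x) (τ • ξ) := by
  obtain ⟨hτ0, hτ1⟩ := hτ
  have hτne : τ ≠ 0 := ne_of_gt hτ0
  have h1τ : (1:ℝ) - τ ≠ 0 := sub_ne_zero.2 hτ1.ne'
  set F : Ed d → ℂ := fun t =>
    f t * conj (g (t - x)) * Complex.exp (-(2 * π * Complex.I) * (⟪t, ξ⟫ : ℝ)) with hF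
  have hcomp := MeasureTheory.Measure.integral_comp_smul (volume : Measure (Ed d)) F τ
  rw [finrank_euclideanSpace_fin, abs_of_pos (inv_pos.2 (pow_pos hτ0 d))] at hcomp
  have key : STFT g f x ξ = (τ ^ d : ℝ) • ∫ u : Ed d, F (τ • u + (1 - τ) • x) := by
    have h1 : (τ ^ d : ℝ) • ∫ u : Ed d, F (τ • u) = STFT g f x ξ := by
      rw [hcomp, smul_smul, mul_inv_cancel₀ (pow_ne_zero d hτne), one_smul]; rfl
    have h2 : ∫ u : Ed d, F (τ • u) = ∫ u : Ed d, F (τ • u + (1 - τ) • x) := by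
      rw [← integral_add_right_eq_self (fun u => F (τ • u)) (((1 - τ) / τ) • x)]
      congr 1
      ext u
      congr 1
      rw [smul_add, smul_smul]
      congr 2
      field_simp
    rw [← h1, h2]
  rw [key, Wtau, mul_assoc, ← integral_const_mul, ← integral_const_mul, ← integral_smul]
  congr 1
  ext u
  have hf' : τ • u + (1 - τ) • x = (1 - τ) • x + τ • u := add_comm _ _
  have hg' : (1 - τ) • x + τ • u - x = -(τ / (1 - τ)) • ((1 - τ) • x - (1 - τ) • u) := by
    match_scalars <;> field_simp <;> ring
  have hi : (⟪(1 - τ) • x + τ • u, ξ⟫ : ℝ) = ⟪u, τ • ξ⟫ + (1 - τ) * ⟪x, ξ⟫ := by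
    rw [inner_add_left, real_inner_smul_left, real_inner_smul_left, real_inner_smul_right]
    ring
  simp only [hF, hf', hg', hi, Complex.real_smul]
  push_cast
  rw [mul_add, Complex.exp_add]
  ring
end
end

section
/- Let d ≥ 1, τ ∈ (0,1), p, q ∈ [1,∞], g ∈ 𝒮(ℝ^d), and let m : ℝ^{2d} → (0,∞) be measurable. Define m_τ(x,ξ) = m(x/(1−τ), ξ/τ). Then there is a constant C = C(τ,p,q,d) > 0, independent of f, g and m, such that for every f ∈ L²(ℝ^d): ∥V_g f∥_{L^{p,q}_m} = C · ∥W_τ(f, Q_τ^{−1}g)∥_{L^{p,q}_{m_τ}} (both sides possibly infinite), where Q_τ^{−1}g(t) = g(−(τ/(1−τ))t). -/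
open MeasureTheory Complex Real ComplexConjugate
open scoped RealInnerProductSpace ENNReal NNReal

noncomputable section

/-- `L^p` "norm" (in `ℝ≥0∞`) of an `ℝ≥0∞`-valued function, with the usual
modification (essential supremum) for `p = ∞`. -/
def lpE {α : Type*} [MeasureSpace α] (p : ℝ≥0∞) (G : α → ℝ≥0∞) : ℝ≥0∞ :=
  if p = ∞ then essSup G volume else (∫⁻ x, G x ^ p.toReal) ^ (1 / p.toReal)

/-- Weighted mixed norm `∥F∥_{L^{p,q}_m}` on `ℝ^{2d}`. -/
def mixedNorm {d : ℕ} (p q : ℝ≥0∞) (m : Ed d × Ed d → ℝ) (F : Ed d × Ed d → ℂ) : ℝ≥0∞ :=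
  lpE q (fun ξ : Ed d => lpE p (fun x : Ed d => (‖F (x, ξ)‖₊ : ℝ≥0∞) * ENNReal.ofReal (m (x, ξ))))

namespace StmtAux

variable {d : ℕ}

def smulME (d : ℕ) (a : ℝ) (ha : a ≠ 0) : Ed d ≃ᵐ Ed d where
  toFun x := a • x
  invFun x := a⁻¹ • x
  left_inv x := by simp [smul_smul, inv_mul_cancel₀ ha]
  right_inv x := by simp [smul_smul, mul_inv_cancel₀ ha]
  measurable_toFun := (continuous_const_smul a).measurable
  measurable_invFun := (continuous_const_smul a⁻¹).measurable

lemma map_smul_volume (a : ℝ) (ha : a ≠ 0) :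
    (volume : Measure (Ed d)).map (fun x => a • x) =
      ENNReal.ofReal |(a ^ d)⁻¹| • volume := by
  have h := Measure.map_linearMap_addHaar_eq_smul_addHaar (E := Ed d)
      (volume : Measure (Ed d))
      (f := a • (LinearMap.id : Ed d →ₗ[ℝ] Ed d)) ?hdet
  case hdet =>
    simp [LinearMap.det_smul, finrank_euclideanSpace_fin, pow_ne_zero, ha]
  · rw [show (fun x : Ed d => a • x) = a • id from rfl]
    simpa [LinearMap.det_smul, finrank_euclideanSpace_fin] using h

def affME (d : ℕ) (x : Ed d) (a : ℝ) (ha : a ≠ 0) : Ed d ≃ᵐ Ed d :=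
  (smulME d a ha).trans (MeasurableEquiv.addLeft x)

lemma map_affME (x : Ed d) (a : ℝ) (ha : a ≠ 0) :
    (volume : Measure (Ed d)).map (affME d x a ha) =
      ENNReal.ofReal |(a ^ d)⁻¹| • volume := by
  have hco : ⇑(affME d x a ha) = (fun y : Ed d => x + y) ∘ (fun t : Ed d => a • t) := rfl
  rw [hco, ← Measure.map_map (measurable_const_add x) (continuous_const_smul a).measurable,
    map_smul_volume a ha, Measure.map_smul, map_add_left_eq_self]

lemma essSup_comp_equiv {α β : Type*} [MeasurableSpace α] [MeasurableSpace β]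
    (μ : Measure α) (e : α ≃ᵐ β) (G : β → ℝ≥0∞) :
    essSup (fun x => G (e x)) μ = essSup G (μ.map e) := by
  rw [essSup, essSup, Filter.limsup_eq, Filter.limsup_eq, ← MeasurableEquiv.map_ae]
  congr 1

lemma lpE_const_mul {α : Type*} [MeasureSpace α] (p : ℝ≥0∞) (hp : 1 ≤ p)
    (c : ℝ≥0∞) (hc : c ≠ ∞) (G : α → ℝ≥0∞) :
    lpE p (fun x => c * G x) = c * lpE p G := by
  by_cases hp' : p = ∞
  · simp only [lpE, hp', if_true]
    exact ENNReal.essSup_const_mul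
  · have hr : 0 < p.toReal :=
      ENNReal.toReal_pos (by intro h; rw [h] at hp; exact absurd hp (by simp)) hp'
    simp only [lpE, hp', if_false]
    have h1 : ∀ x, (c * G x) ^ p.toReal = c ^ p.toReal * G x ^ p.toReal := fun x =>
      ENNReal.mul_rpow_of_nonneg _ _ hr.le
    simp only [h1]
    rw [lintegral_const_mul' _ _ (by exact ENNReal.rpow_ne_top_of_nonneg hr.le hc),
      ENNReal.mul_rpow_of_nonneg _ _ (by positivity), ← ENNReal.rpow_mul,
      mul_one_div_cancel hr.ne', ENNReal.rpow_one]

lemma lpE_comp_smul (p : ℝ≥0∞) (hp : 1 ≤ p) (a : ℝ) (ha : a ≠ 0) (G : Ed d → ℝ≥0∞) :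
    lpE p (fun x : Ed d => G (a • x)) =
      ENNReal.ofReal |(a ^ d)⁻¹| ^ (1 / p.toReal) * lpE p G := by
  have hmap : (volume : Measure (Ed d)).map (smulME d a ha) =
      ENNReal.ofReal |(a ^ d)⁻¹| • volume := by
    have hco : ⇑(smulME d a ha) = fun x : Ed d => a • x := rfl
    rw [hco]; exact map_smul_volume a ha
  by_cases hp' : p = ∞
  · simp only [lpE, hp', if_true, ENNReal.toReal_top, div_zero, ENNReal.rpow_zero, one_mul]
    have hco : essSup (fun x => G (a • x)) (volume : Measure (Ed d)) =
        essSup (fun x => G (smulME d a ha x)) volume := rfl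
    rw [hco, essSup_comp_equiv volume (smulME d a ha) G, hmap,
      essSup_ennreal_smul_measure (by simp [abs_pos, pow_ne_zero, ha])]
  · have hr : 0 < p.toReal :=
      ENNReal.toReal_pos (by intro h; rw [h] at hp; exact absurd hp (by simp)) hp'
    simp only [lpE, hp', if_false]
    have hint : ∫⁻ x : Ed d, G (a • x) ^ p.toReal =
        ENNReal.ofReal |(a ^ d)⁻¹| * ∫⁻ y, G y ^ p.toReal := by
      have h := lintegral_map_equiv (μ := (volume : Measure (Ed d)))
        (fun y => G y ^ p.toReal) (smulME d a ha)
      rw [hmap] at h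
      have hco : ∫⁻ x : Ed d, G (a • x) ^ p.toReal =
          ∫⁻ x : Ed d, G (smulME d a ha x) ^ p.toReal := rfl
      rw [hco, ← h, lintegral_smul_measure, smul_eq_mul]
    rw [hint, ENNReal.mul_rpow_of_nonneg _ _ (by positivity)]

lemma wtau_eq (τ : ℝ) (hτ : τ ∈ Set.Ioo (0:ℝ) 1) (f g : Ed d → ℂ) (x ξ : Ed d) :
    Wtau τ f (fun t => g (-(τ / (1 - τ)) • t)) x ξ =
      ((τ ^ d : ℝ)⁻¹ : ℂ) * (Complex.exp ((2 * π * Complex.I) * (⟪x, (1/τ) • ξ⟫ : ℝ)) *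
        STFT g f ((1 / (1 - τ)) • x) ((1/τ) • ξ)) := by
  obtain ⟨hτ0, hτ1⟩ := hτ
  have h1τ : (1:ℝ) - τ ≠ 0 := by linarith
  have hτ' : τ ≠ 0 := ne_of_gt hτ0
  set x' : Ed d := (1 / (1 - τ)) • x with hx'
  set ξ' : Ed d := (1/τ) • ξ with hξ'
  set H : Ed d → ℂ := fun s =>
    Complex.exp ((2 * π * Complex.I) * (⟪x, ξ'⟫ : ℝ)) *
      (f s * conj (g (s - x')) * Complex.exp (-(2 * π * Complex.I) * (⟪s, ξ'⟫ : ℝ))) with hH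
  have key : ∀ t : Ed d,
      Complex.exp (-(2 * π * Complex.I) * (⟪t, ξ⟫ : ℝ)) * f (x + τ • t) *
        conj (g (-(τ / (1 - τ)) • (x - (1 - τ) • t))) = H (affME d x τ hτ' t) := by
    intro t
    have he : affME d x τ hτ' t = x + τ • t := rfl
    have hgarg : -(τ / (1 - τ)) • (x - (1 - τ) • t) = (x + τ • t) - x' := by
      rw [hx']
      match_scalars <;> (field_simp; try ring)
    have hinner1 : (⟪x + τ • t, ξ'⟫ : ℝ) = (1/τ) * ⟪x, ξ⟫ + ⟪t, ξ⟫ := by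
      rw [hξ', inner_add_left, real_inner_smul_right, real_inner_smul_left,
        real_inner_smul_right]
      field_simp
    have hinner2 : (⟪x, ξ'⟫ : ℝ) = (1/τ) * ⟪x, ξ⟫ := by
      rw [hξ', real_inner_smul_right]
    have hexp : Complex.exp (-(2 * π * Complex.I) * (⟪t, ξ⟫ : ℝ)) =
        Complex.exp ((2 * π * Complex.I) * (⟪x, ξ'⟫ : ℝ)) *
          Complex.exp (-(2 * π * Complex.I) * (⟪x + τ • t, ξ'⟫ : ℝ)) := by
      rw [← Complex.exp_add]
      congr 1
      rw [hinner1, hinner2]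
      push_cast
      ring
    rw [he, hH, hgarg, hexp]
    ring
  have hW : Wtau τ f (fun t => g (-(τ / (1 - τ)) • t)) x ξ =
      ∫ t : Ed d, H (affME d x τ hτ' t) := by
    rw [Wtau]
    exact integral_congr_ae (Filter.Eventually.of_forall key)
  rw [hW, ← integral_map_equiv (affME d x τ hτ') H, map_affME, integral_smul_measure,
    STFT, hH, integral_const_mul]
  have habs : |((τ:ℝ) ^ d)⁻¹| = ((τ:ℝ) ^ d)⁻¹ := abs_of_pos (by positivity)
  rw [habs, ENNReal.toReal_ofReal (by positivity), Complex.real_smul]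
  norm_cast

lemma nnnorm_wtau (τ : ℝ) (hτ : τ ∈ Set.Ioo (0:ℝ) 1) (f g : Ed d → ℂ) (x ξ : Ed d) :
    (‖Wtau τ f (fun t => g (-(τ / (1 - τ)) • t)) x ξ‖₊ : ℝ≥0∞) =
      ENNReal.ofReal (τ ^ d)⁻¹ *
        (‖STFT g f ((1 / (1 - τ)) • x) ((1/τ) • ξ)‖₊ : ℝ≥0∞) := by
  obtain ⟨hτ0, hτ1⟩ := hτ
  rw [wtau_eq τ ⟨hτ0, hτ1⟩ f g x ξ, ← enorm_eq_nnnorm, ← enorm_eq_nnnorm, ← ofReal_norm, ← ofReal_norm,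
    norm_mul, norm_mul]
  have h1 : ‖(((τ ^ d : ℝ) : ℂ))⁻¹‖ = (τ ^ d : ℝ)⁻¹ := by
    rw [norm_inv, Complex.norm_real, Real.norm_eq_abs, abs_of_pos (by positivity)]
  have h2 : ‖Complex.exp ((2 * π * Complex.I) * ((⟪x, (1/τ) • ξ⟫ : ℝ) : ℂ))‖ = 1 := by
    rw [Complex.norm_exp]
    have : ((2 * π * Complex.I) * ((⟪x, (1/τ) • ξ⟫ : ℝ) : ℂ)).re = 0 := by
      simp [Complex.mul_re, Complex.mul_im]
    rw [this, Real.exp_zero]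
  rw [h1, h2, one_mul, ENNReal.ofReal_mul (by positivity)]

end StmtAux

open StmtAux in
/-- `∥V_g f∥_{L^{p,q}_m} = C ∥W_τ(f, Q_τ^{−1}g)∥_{L^{p,q}_{m_τ}}`
with `m_τ(x,ξ) = m(x/(1−τ), ξ/τ)` and `C = C(τ,p,q,d)` independent of `f, g, m`. -/
theorem stmt2 (d : ℕ) (hd : 1 ≤ d) (τ : ℝ) (hτ : τ ∈ Set.Ioo (0:ℝ) 1)
    (p q : ℝ≥0∞) (hp : 1 ≤ p) (hq : 1 ≤ q) :
    ∃ C : ℝ, 0 < C ∧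
      ∀ (g : SchwartzMap (Ed d) ℂ) (m : Ed d × Ed d → ℝ),
        Measurable m → (∀ z, 0 < m z) →
        ∀ f : Ed d → ℂ, MemLp f 2 (volume : Measure (Ed d)) →
          mixedNorm p q m (fun z => STFT (⇑g) f z.1 z.2) =
            ENNReal.ofReal C *
              mixedNorm p q (fun z => m ((1 / (1 - τ)) • z.1, (1 / τ) • z.2))
                (fun z => Wtau τ f (fun t => g (-(τ / (1 - τ)) • t)) z.1 z.2) := by
  obtain ⟨hτ0, hτ1⟩ := hτ
  have h1τ : (0:ℝ) < 1 - τ := by linarith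
  have hτ' : τ ≠ 0 := ne_of_gt hτ0
  have h1τ' : (1:ℝ) - τ ≠ 0 := ne_of_gt h1τ
  set pr : ℝ := 1 / p.toReal with hpr
  set qr : ℝ := 1 / q.toReal with hqr
  have hpr0 : 0 ≤ pr := by positivity
  have hqr0 : 0 ≤ qr := by positivity
  set X : ℝ := (1 - τ) ^ d with hX
  set Y : ℝ := τ ^ d with hY
  have hXpos : 0 < X := by positivity
  have hYpos : 0 < Y := by positivity
  refine ⟨Y * X ^ (-pr) * Y ^ (-qr), by positivity, ?_⟩
  intro g m hm hmpos f hf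
  set C : ℝ := Y * X ^ (-pr) * Y ^ (-qr) with hC
  set a : ℝ := 1 / (1 - τ) with ha
  set b : ℝ := 1 / τ with hb
  have ha' : a ≠ 0 := by positivity
  have hb' : b ≠ 0 := by positivity
  have habsa : |(a ^ d)⁻¹| = X := by
    rw [ha, hX, one_div, inv_pow, inv_inv]
    exact abs_of_pos (by positivity)
  have habsb : |(b ^ d)⁻¹| = Y := by
    rw [hb, hY, one_div, inv_pow, inv_inv]
    exact abs_of_pos (by positivity)
  set Φ : Ed d → ℝ≥0∞ := fun η =>
    lpE p (fun u : Ed d => (‖STFT (⇑g) f u η‖₊ : ℝ≥0∞) * ENNReal.ofReal (m (u, η))) with hΦ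
  have hc1top : ENNReal.ofReal Y⁻¹ * ENNReal.ofReal X ^ pr ≠ ∞ :=
    ENNReal.mul_ne_top ENNReal.ofReal_ne_top
      (ENNReal.rpow_ne_top_of_nonneg hpr0 ENNReal.ofReal_ne_top)
  have hinner : ∀ ξ : Ed d,
      lpE p (fun x : Ed d =>
          (‖Wtau τ f (fun t => g (-(τ / (1 - τ)) • t)) x ξ‖₊ : ℝ≥0∞) *
            ENNReal.ofReal (m (a • x, b • ξ))) =
        (ENNReal.ofReal Y⁻¹ * ENNReal.ofReal X ^ pr) * Φ (b • ξ) := by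
    intro ξ
    have hptw : (fun x : Ed d =>
        (‖Wtau τ f (fun t => g (-(τ / (1 - τ)) • t)) x ξ‖₊ : ℝ≥0∞) *
          ENNReal.ofReal (m (a • x, b • ξ))) =
        fun x : Ed d => ENNReal.ofReal Y⁻¹ *
          ((‖STFT (⇑g) f (a • x) (b • ξ)‖₊ : ℝ≥0∞) *
            ENNReal.ofReal (m (a • x, b • ξ))) := by
      funext x
      have := nnnorm_wtau (d := d) τ ⟨hτ0, hτ1⟩ f (⇑g) x ξ
      rw [show ((1:ℝ) / (1 - τ)) • x = a • x from rfl,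
        show ((1:ℝ)/τ) • ξ = b • ξ from rfl] at this
      rw [this, hY]
      ring
    rw [hptw, lpE_const_mul p hp _ ENNReal.ofReal_ne_top]
    have h2 : lpE p (fun x : Ed d => (‖STFT (⇑g) f (a • x) (b • ξ)‖₊ : ℝ≥0∞) *
        ENNReal.ofReal (m (a • x, b • ξ))) = ENNReal.ofReal X ^ pr * Φ (b • ξ) := by
      have h3 := lpE_comp_smul p hp a ha'
        (fun u : Ed d => (‖STFT (⇑g) f u (b • ξ)‖₊ : ℝ≥0∞) * ENNReal.ofReal (m (u, b • ξ)))
      rw [habsa] at h3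
      exact h3
    rw [h2]
    ring
  have houter : mixedNorm p q (fun z => m ((1 / (1 - τ)) • z.1, (1 / τ) • z.2))
      (fun z => Wtau τ f (fun t => g (-(τ / (1 - τ)) • t)) z.1 z.2) =
      (ENNReal.ofReal Y⁻¹ * ENNReal.ofReal X ^ pr) *
        (ENNReal.ofReal Y ^ qr * lpE q Φ) := by
    rw [mixedNorm]
    have hcong : (fun ξ : Ed d => lpE p (fun x : Ed d =>
        (‖Wtau τ f (fun t => g (-(τ / (1 - τ)) • t)) x ξ‖₊ : ℝ≥0∞) *
          ENNReal.ofReal (m (a • x, b • ξ)))) =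
        fun ξ : Ed d => (ENNReal.ofReal Y⁻¹ * ENNReal.ofReal X ^ pr) *
          Φ (b • ξ) := funext hinner
    rw [show (fun ξ : Ed d => lpE p fun x : Ed d =>
        (‖Wtau τ f (fun t => g (-(τ / (1 - τ)) • t)) x ξ‖₊ : ℝ≥0∞) *
          ENNReal.ofReal (m ((1 / (1 - τ)) • x, (1 / τ) • ξ))) =
        fun ξ : Ed d => (ENNReal.ofReal Y⁻¹ * ENNReal.ofReal X ^ pr) * Φ (b • ξ)
      from hcong]
    rw [lpE_const_mul q hq _ hc1top]
    have h4 := lpE_comp_smul q hq b hb' Φ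
    rw [habsb] at h4
    rw [h4]
  have hMN : mixedNorm p q m (fun z => STFT (⇑g) f z.1 z.2) = lpE q Φ := rfl
  rw [houter, hMN]
  have hkey : ENNReal.ofReal C *
      (ENNReal.ofReal Y⁻¹ * ENNReal.ofReal X ^ pr) * ENNReal.ofReal Y ^ qr = 1 := by
    rw [ENNReal.ofReal_rpow_of_pos hXpos, ENNReal.ofReal_rpow_of_pos hYpos,
      ← ENNReal.ofReal_mul (by positivity), ← ENNReal.ofReal_mul (by positivity),
      ← ENNReal.ofReal_mul (by positivity)]
    have hreal : C * (Y⁻¹ * X ^ pr) * Y ^ qr = 1 := by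
      rw [hC]
      have e1 : X ^ (-pr) * X ^ pr = 1 := by
        rw [← Real.rpow_add hXpos]; simp
      have e2 : Y ^ (-qr) * Y ^ qr = 1 := by
        rw [← Real.rpow_add hYpos]; simp
      calc Y * X ^ (-pr) * Y ^ (-qr) * (Y⁻¹ * X ^ pr) * Y ^ qr
          = (Y * Y⁻¹) * (X ^ (-pr) * X ^ pr) * (Y ^ (-qr) * Y ^ qr) := by ring
        _ = 1 := by rw [mul_inv_cancel₀ hYpos.ne', e1, e2]; ring
    rw [hreal, ENNReal.ofReal_one]
  calc lpE q Φ = 1 * lpE q Φ := (one_mul _).symm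
    _ = (ENNReal.ofReal C * (ENNReal.ofReal Y⁻¹ * ENNReal.ofReal X ^ pr) *
          ENNReal.ofReal Y ^ qr) * lpE q Φ := by rw [hkey]
    _ = ENNReal.ofReal C * ((ENNReal.ofReal Y⁻¹ * ENNReal.ofReal X ^ pr) *
          (ENNReal.ofReal Y ^ qr * lpE q Φ)) := by ring
end
end
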